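/- arXiv:2006.07356 — 2 statements merged into one kernel-verified Lean document; each statement's English description precedes it below -/
import Mathlib

section
/- Let W ~ N(0, σ_w²) and B ~ N(0, σ_b²) be independent Gaussian random variables with σ_w, σ_b > 0, let C = −B/W, and define ζ(x) = E[W² | C = x] p_C(x). Then for all x ∈ ℝ, ζ(x) = 2 σ_w³ σ_b³ / (π (σ_b² + x² σ_w²)²). -/
/-!
The two Gaussian factors multiply to a single centred Gaussian `exp (-b w²)` with
`b = 1/(2σ_w²) + x²/(2σ_b²)`, and its absolute third moment is `∫ |w|³ exp (-b w²) = Γ(2) / b²`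
by the Gamma integral. Substituting `b` and the normalising constants `1/(2π σ_w σ_b)` gives the
closed form.
-/

open Real MeasureTheory Set

theorem integral_abs_rpow_mul_exp_neg_mul_sq {b q : ℝ} (hb : 0 < b) (hq : -1 < q) :
    ∫ w : ℝ, |w| ^ q * exp (-b * w ^ 2) = b ^ (-(q + 1) / 2) * Gamma ((q + 1) / 2) := by
  have h_even : ∫ w : ℝ, |w| ^ q * exp (-b * w ^ 2)
      = ∫ w : ℝ, (fun t : ℝ => t ^ q * exp (-b * t ^ (2 : ℝ))) |w| := by
    simp_rw [rpow_two, sq_abs]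
  rw [h_even, integral_comp_abs (f := fun t : ℝ => t ^ q * exp (-b * t ^ (2 : ℝ))),
    integral_rpow_mul_exp_neg_mul_rpow two_pos hq hb]
  ring

theorem integral_abs_pow_three_mul_exp_neg_mul_sq {b : ℝ} (hb : 0 < b) :
    ∫ w : ℝ, |w| ^ 3 * exp (-b * w ^ 2) = (b ^ 2)⁻¹ := by
  have h := integral_abs_rpow_mul_exp_neg_mul_sq hb (q := 3) (by norm_num)
  norm_num [rpow_natCast] at h
  simpa only [neg_mul] using h

theorem exp_neg_sq_div_mul_exp_neg_sq_div (w x s t : ℝ) :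
    exp (-(w ^ 2) / s) * exp (-((-(w * x)) ^ 2) / t) = exp (-(1 / s + x ^ 2 / t) * w ^ 2) := by
  rw [← exp_add]
  ring_nf

/-- Explicit curvature penalty for independent Gaussian initialization
`W ~ N(0,σ_w²)`, `B ~ N(0,σ_b²)`:
`ζ(x) = ∫ |w|³ p_W(w) p_B(−wx) dw = 2σ_w³σ_b³ / (π(σ_b² + x²σ_w²)²)`. -/
theorem stmt5 (σw σb : ℝ) (hσw : 0 < σw) (hσb : 0 < σb) (x : ℝ) :
    (∫ w : ℝ, |w| ^ 3
        * ((Real.sqrt (2 * Real.pi) * σw)⁻¹ * Real.exp (-(w ^ 2) / (2 * σw ^ 2)))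
        * ((Real.sqrt (2 * Real.pi) * σb)⁻¹ * Real.exp (-((-(w * x)) ^ 2) / (2 * σb ^ 2))))
      = 2 * σw ^ 3 * σb ^ 3 / (Real.pi * (σb ^ 2 + x ^ 2 * σw ^ 2) ^ 2) := by
  set b := 1 / (2 * σw ^ 2) + x ^ 2 / (2 * σb ^ 2) with hb_def
  have hb : 0 < b := by positivity
  have h_integrand : ∀ w : ℝ, |w| ^ 3
        * ((Real.sqrt (2 * Real.pi) * σw)⁻¹ * Real.exp (-(w ^ 2) / (2 * σw ^ 2)))
        * ((Real.sqrt (2 * Real.pi) * σb)⁻¹ * Real.exp (-((-(w * x)) ^ 2) / (2 * σb ^ 2)))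
      = (Real.sqrt (2 * Real.pi) * σw)⁻¹ * (Real.sqrt (2 * Real.pi) * σb)⁻¹
        * (|w| ^ 3 * Real.exp (-b * w ^ 2)) := by
    intro w
    rw [← exp_neg_sq_div_mul_exp_neg_sq_div]
    ring
  simp_rw [h_integrand]
  rw [integral_const_mul, integral_abs_pow_three_mul_exp_neg_mul_sq hb, hb_def]
  have h_sqrt : Real.sqrt (2 * Real.pi) ^ 2 = 2 * Real.pi := sq_sqrt (by positivity)
  field_simp
  rw [h_sqrt]
end

section
/- Let W ~ U(−a_w, a_w) and B ~ U(−a_b, a_b) be independent with a_b/a_w ≥ L > 0, and let C = −B/W. Then for |c| ≤ L, the conditional distribution of W given C = c does not depend on c, and the function ζ(x) = E[W² | C = x] p_C(x) is constant on [−L, L]. -/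
lemma key (aw ab L : ℝ) (haw : 0 < aw) (hL : 0 < L) (hLab : L ≤ ab / aw)
    (p : ℝ × ℝ → ℝ)
    (hp : ∀ q : ℝ × ℝ, p q = if |q.1| ≤ aw ∧ |q.2| ≤ ab then 1 / (4 * aw * ab) else 0)
    (c : ℝ) (hc : |c| ≤ L) (w : ℝ) :
    p (w, -c * w) = if |w| ≤ aw then 1 / (4 * aw * ab) else 0 := by
  rw [hp]
  simp only
  congr 1
  simp only [eq_iff_iff, and_iff_left_iff_imp]
  intro hw
  have : |(-c * w)| = |c| * |w| := by rw [abs_mul, abs_neg]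
  rw [this]
  calc |c| * |w| ≤ L * aw := by
        apply mul_le_mul (le_trans hc le_rfl) hw (abs_nonneg _) hL.le
    _ ≤ (ab / aw) * aw := by nlinarith
    _ = ab := by field_simp

/-- Uniform initialization gives a constant curvature penalty on `[−L, L]` when
`a_b/a_w ≥ L`: the (unnormalized) conditional density of `W` given `C = c`, namely
`w ↦ |w| p_{W,B}(w, −cw)`, does not depend on `c` for `|c| ≤ L`, and hence
`ζ(x) = E[W²|C=x] p_C(x) = ∫ w² |w| p_{W,B}(w, −xw) dw` is constant on `[−L, L]`. -/
theorem stmt9 (aw ab L : ℝ) (haw : 0 < aw) (hab : 0 < ab) (hL : 0 < L)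
    (hLab : L ≤ ab / aw)
    (p : ℝ × ℝ → ℝ)
    (hp : ∀ q : ℝ × ℝ, p q = if |q.1| ≤ aw ∧ |q.2| ≤ ab then 1 / (4 * aw * ab) else 0) :
    (∀ c₁ c₂ : ℝ, |c₁| ≤ L → |c₂| ≤ L →
      (fun w : ℝ => |w| * p (w, -c₁ * w)) = fun w : ℝ => |w| * p (w, -c₂ * w)) ∧
    ∀ x₁ x₂ : ℝ, |x₁| ≤ L → |x₂| ≤ L →
      (∫ w : ℝ, w ^ 2 * (|w| * p (w, -x₁ * w)))
        = ∫ w : ℝ, w ^ 2 * (|w| * p (w, -x₂ * w)) := by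
  constructor
  · intro c₁ c₂ h1 h2
    funext w
    rw [key aw ab L haw hL hLab p hp c₁ h1 w, key aw ab L haw hL hLab p hp c₂ h2 w]
  · intro x₁ x₂ h1 h2
    congr 1
    funext w
    rw [key aw ab L haw hL hLab p hp x₁ h1 w, key aw ab L haw hL hLab p hp x₂ h2 w]
end
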